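/- Let n and m be nonempty finite types. Let A : ℕ → Matrix n n ℝ be a sequence of state transition matrices for which there exists ε > 0 such that for all k, i, j, ε ≤ (A k) i j, and for all k, i, ∑ j, (A k) i j = 1 (each A k is entrywise positive and right stochastic, uniformly in k). For k p : ℕ define the state transition matrix Φ k p : Matrix n n ℝ over p steps starting at time k by Φ k 0 = 1 (identity) and Φ k (p+1) = A (k + p) * Φ k p. Let C : Matrix m n ℝ have at least one nonzero row sum, i.e. there exists i : m with ∑ j, C i j ≠ 0. Then the time-varying pair (A, C) is uniformly detectable: there exist p q : ℕ and a b : ℝ with 0 ≤ a < 1 and 0 < b such that for every k : ℕ and every ζ : n → ℝ satisfying a * ‖ζ‖ ≤ ‖(Φ k p) *ᵥ ζ‖, one has b * (ζ ⬝ᵥ ζ) ≤ ∑ i in Finset.range (q + 1), (C *ᵥ ((Φ k i) *ᵥ ζ)) ⬝ᵥ (C *ᵥ ((Φ k i) *ᵥ ζ)). -/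

import Mathlib

/-!
If every entry of a right-stochastic matrix `M` is at least `ε`, then `M` contracts the
sup-distance to the constant vectors by the factor `δ = 1 - (card n) ε < 1`: subtracting `ε` from
every entry leaves nonnegative weights with row sums `δ`. Hence `x = Φ k p ζ` lies within
`δ ^ p ‖ζ‖` of a constant vector `c`. For large `p`, the hypothesis `‖x‖ ≥ ‖ζ‖ / 2` then forces
`|c| ≳ ‖ζ‖ / 2`, and a row of `C` with nonzero sum `s` sees `(C x) i₀ ≈ s c`, so the single
output at time `p` already has energy of order `s ^ 2 ‖ζ‖ ^ 2 ≥ s ^ 2 (ζ ⬝ᵥ ζ) / card n`.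
-/

open Matrix Finset

section

variable {n : Type*} [Fintype n]

theorem one_sub_card_mul_nonneg_of_le_of_sum_eq_one [Nonempty n] {ε : ℝ} {M : Matrix n n ℝ}
    (hM : ∀ i j, ε ≤ M i j) (hrow : ∀ i, ∑ j, M i j = 1) :
    0 ≤ 1 - Fintype.card n * ε := by
  obtain ⟨i⟩ := ‹Nonempty n›
  have : ∑ _j : n, ε ≤ ∑ j, M i j := sum_le_sum fun j _ => hM i j
  simp only [sum_const, card_univ, nsmul_eq_mul, hrow i] at this
  linarith

theorem exists_norm_mulVec_sub_const_le [Nonempty n] {ε : ℝ} {M : Matrix n n ℝ}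
    (hM : ∀ i j, ε ≤ M i j) (hrow : ∀ i, ∑ j, M i j = 1) (x : n → ℝ) (c : ℝ) :
    ∃ c' : ℝ, ‖M *ᵥ x - fun _ => c'‖ ≤ (1 - Fintype.card n * ε) * ‖x - fun _ => c‖ := by
  have hδ := one_sub_card_mul_nonneg_of_le_of_sum_eq_one hM hrow
  have hweights (i : n) : ∑ j, (M i j - ε) = 1 - Fintype.card n * ε := by
    rw [sum_sub_distrib, hrow i, sum_const, card_univ, nsmul_eq_mul]
  refine ⟨ε * ∑ j, x j + (1 - Fintype.card n * ε) * c,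
    (pi_norm_le_iff_of_nonneg (by positivity)).2 fun i => ?_⟩
  have hdecomp : (M *ᵥ x) i - (ε * ∑ j, x j + (1 - Fintype.card n * ε) * c) =
      ∑ j, (M i j - ε) * (x j - c) := by
    simp only [mulVec, dotProduct, mul_sum, ← hweights i, sum_mul]
    rw [← sum_add_distrib, ← sum_sub_distrib]
    exact sum_congr rfl fun j _ => by ring
  rw [Pi.sub_apply, Real.norm_eq_abs, hdecomp]
  calc |∑ j, (M i j - ε) * (x j - c)| ≤ ∑ j, (M i j - ε) * ‖x - fun _ => c‖ := by
        refine (abs_sum_le_sum_abs _ _).trans (sum_le_sum fun j _ => ?_)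
        rw [abs_mul, abs_of_nonneg (sub_nonneg.2 (hM i j))]
        exact mul_le_mul_of_nonneg_left (norm_le_pi_norm (x - fun _ => c) j)
          (sub_nonneg.2 (hM i j))
    _ = (1 - Fintype.card n * ε) * ‖x - fun _ => c‖ := by rw [← sum_mul, hweights i]

theorem exists_norm_mulVec_sub_const_le_pow [Nonempty n] [DecidableEq n] {ε : ℝ}
    {A : ℕ → Matrix n n ℝ} (hA : ∀ k i j, ε ≤ A k i j) (hrow : ∀ k i, ∑ j, A k i j = 1)
    {Φ : ℕ → ℕ → Matrix n n ℝ} (hΦ0 : ∀ k, Φ k 0 = 1)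
    (hΦsucc : ∀ k p, Φ k (p + 1) = A (k + p) * Φ k p) (k p : ℕ) (x : n → ℝ) :
    ∃ c : ℝ, ‖Φ k p *ᵥ x - fun _ => c‖ ≤ (1 - Fintype.card n * ε) ^ p * ‖x‖ := by
  induction p with
  | zero => exact ⟨0, by simp [hΦ0, ← Pi.zero_def]⟩
  | succ p ih =>
    obtain ⟨c, hc⟩ := ih
    obtain ⟨c', hc'⟩ := exists_norm_mulVec_sub_const_le (hA (k + p)) (hrow (k + p)) _ c
    refine ⟨c', ?_⟩
    rw [hΦsucc, ← mulVec_mulVec, pow_succ', mul_assoc]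
    exact hc'.trans (mul_le_mul_of_nonneg_left hc
      (one_sub_card_mul_nonneg_of_le_of_sum_eq_one (hA 0) (hrow 0)))

theorem abs_dotProduct_le (v y : n → ℝ) : |v ⬝ᵥ y| ≤ (∑ j, |v j|) * ‖y‖ := by
  rw [sum_mul]
  refine (abs_sum_le_sum_abs _ _).trans (sum_le_sum fun j _ => ?_)
  rw [abs_mul]
  exact mul_le_mul_of_nonneg_left (norm_le_pi_norm y j) (abs_nonneg _)

theorem sub_mul_le_abs_dotProduct_of_norm_sub_const_le (v y : n → ℝ) {c r : ℝ}
    (hy : ‖y - fun _ => c‖ ≤ r) :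
    |∑ j, v j| * ‖y‖ - (|∑ j, v j| + ∑ j, |v j|) * r ≤ |v ⬝ᵥ y| := by
  have hsplit : v ⬝ᵥ y = (∑ j, v j) * c + v ⬝ᵥ (y - fun _ => c) := by
    simp only [dotProduct, sum_mul, Pi.sub_apply, mul_sub, sum_sub_distrib]; ring
  have hc : ‖y‖ - r ≤ |c| := by
    have := norm_le_norm_sub_add y (fun _ : n => c)
    linarith [pi_norm_const_le (ι := n) c, Real.norm_eq_abs c]
  have hrest := (abs_dotProduct_le v (y - fun _ => c)).trans
    (mul_le_mul_of_nonneg_left hy (sum_nonneg fun j _ => abs_nonneg (v j)))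
  rw [hsplit]
  calc |∑ j, v j| * ‖y‖ - (|∑ j, v j| + ∑ j, |v j|) * r
      = |∑ j, v j| * (‖y‖ - r) - (∑ j, |v j|) * r := by ring
    _ ≤ |(∑ j, v j) * c| - |v ⬝ᵥ (y - fun _ => c)| := by
      rw [abs_mul]; gcongr
    _ ≤ _ := abs_sub_abs_le_abs_add _ _

theorem sq_le_dotProduct_self (y : n → ℝ) (i : n) : y i ^ 2 ≤ y ⬝ᵥ y := by
  simpa only [dotProduct, sq] using
    single_le_sum (f := fun j => y j * y j) (fun j _ => mul_self_nonneg (y j)) (mem_univ i)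

theorem dotProduct_self_le_card_mul_norm_sq (y : n → ℝ) :
    y ⬝ᵥ y ≤ Fintype.card n * ‖y‖ ^ 2 := by
  calc y ⬝ᵥ y = ∑ j, |y j| ^ 2 := sum_congr rfl fun j _ => by rw [sq_abs, sq]
    _ ≤ ∑ _j : n, ‖y‖ ^ 2 := sum_le_sum fun j _ => by
      gcongr; exact norm_le_pi_norm y j
    _ = Fintype.card n * ‖y‖ ^ 2 := by rw [sum_const, card_univ, nsmul_eq_mul]

end

theorem time_varying_stochastic_uniformly_detectable_general
    {n m : Type*} [Fintype n] [Nonempty n] [DecidableEq n] [Fintype m]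
    (A : ℕ → Matrix n n ℝ)
    (hpos : ∃ ε : ℝ, 0 < ε ∧ ∀ k i j, ε ≤ (A k) i j)
    (hstoch : ∀ k i, ∑ j, (A k) i j = 1)
    (Φ : ℕ → ℕ → Matrix n n ℝ)
    (hΦ0 : ∀ k, Φ k 0 = 1)
    (hΦsucc : ∀ k p, Φ k (p + 1) = A (k + p) * Φ k p)
    (C : Matrix m n ℝ) (hC : ∃ i, ∑ j, C i j ≠ 0) :
    ∃ p q : ℕ, ∃ a b : ℝ, 0 ≤ a ∧ a < 1 ∧ 0 < b ∧
      ∀ k : ℕ, ∀ ζ : n → ℝ, a * ‖ζ‖ ≤ ‖(Φ k p) *ᵥ ζ‖ →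
        b * (ζ ⬝ᵥ ζ) ≤ ∑ i ∈ Finset.range (q + 1),
          (C *ᵥ ((Φ k i) *ᵥ ζ)) ⬝ᵥ (C *ᵥ ((Φ k i) *ᵥ ζ)) := by
  obtain ⟨ε, hε, hA⟩ := hpos
  obtain ⟨i₀, hs⟩ := hC
  set s := ∑ j, C i₀ j
  set K := ∑ j, |C i₀ j|
  have hδ : 1 - Fintype.card n * ε < 1 := by simp only [sub_lt_self_iff]; positivity
  obtain ⟨p, hp⟩ := exists_pow_lt_of_lt_one
    (show 0 < |s| / (4 * (|s| + K)) by positivity) hδ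
  refine ⟨p, p, 1 / 2, s ^ 2 / (16 * Fintype.card n), by norm_num, by norm_num, by positivity,
    fun k ζ hζ => ?_⟩
  obtain ⟨c, hc⟩ := exists_norm_mulVec_sub_const_le_pow hA hstoch hΦ0 hΦsucc k p ζ
  have hout : |s| * ‖ζ‖ / 4 ≤ |(C *ᵥ (Φ k p *ᵥ ζ)) i₀| := by
    have hfar := sub_mul_le_abs_dotProduct_of_norm_sub_const_le (C i₀) _ hc
    have hclose : (|s| + K) * ((1 - Fintype.card n * ε) ^ p * ‖ζ‖) ≤ |s| * ‖ζ‖ / 4 := by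
      have hsmall := (lt_div_iff₀' (by positivity : (0 : ℝ) < 4 * (|s| + K))).1 hp
      calc (|s| + K) * ((1 - Fintype.card n * ε) ^ p * ‖ζ‖)
          = 4 * (|s| + K) * (1 - Fintype.card n * ε) ^ p * ‖ζ‖ / 4 := by ring
        _ ≤ |s| * ‖ζ‖ / 4 := by gcongr
    have := mul_le_mul_of_nonneg_left hζ (abs_nonneg s)
    change _ ≤ |C i₀ ⬝ᵥ _|
    linarith
  calc s ^ 2 / (16 * Fintype.card n) * (ζ ⬝ᵥ ζ)
      ≤ s ^ 2 / (16 * Fintype.card n) * (Fintype.card n * ‖ζ‖ ^ 2) := by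
        gcongr; exact dotProduct_self_le_card_mul_norm_sq ζ
    _ = (|s| * ‖ζ‖ / 4) ^ 2 := by field_simp; rw [sq_abs]; ring
    _ ≤ (C *ᵥ (Φ k p *ᵥ ζ)) i₀ ^ 2 := by rw [← sq_abs ((C *ᵥ _) i₀)]; gcongr
    _ ≤ (C *ᵥ (Φ k p *ᵥ ζ)) ⬝ᵥ (C *ᵥ (Φ k p *ᵥ ζ)) := sq_le_dotProduct_self _ i₀
    _ ≤ _ := single_le_sum (f := fun i => (C *ᵥ (Φ k i *ᵥ ζ)) ⬝ᵥ (C *ᵥ (Φ k i *ᵥ ζ)))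
        (fun i _ => (sq_nonneg _).trans (sq_le_dotProduct_self _ i₀)) (self_mem_range_succ p)

/-- A time-varying pair `(A, C)` with uniformly entrywise-positive,
right-stochastic state matrices and an output matrix `C` with a nonzero row sum is
uniformly detectable. -/
theorem time_varying_stochastic_uniformly_detectable
    {n m : Type*} [Fintype n] [Nonempty n] [DecidableEq n] [Fintype m] [Nonempty m]
    (A : ℕ → Matrix n n ℝ)
    (hpos : ∃ ε : ℝ, 0 < ε ∧ ∀ k i j, ε ≤ (A k) i j)
    (hstoch : ∀ k i, ∑ j, (A k) i j = 1)
    (Φ : ℕ → ℕ → Matrix n n ℝ)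
    (hΦ0 : ∀ k, Φ k 0 = 1)
    (hΦsucc : ∀ k p, Φ k (p + 1) = A (k + p) * Φ k p)
    (C : Matrix m n ℝ) (hC : ∃ i, ∑ j, C i j ≠ 0) :
    ∃ p q : ℕ, ∃ a b : ℝ, 0 ≤ a ∧ a < 1 ∧ 0 < b ∧
      ∀ k : ℕ, ∀ ζ : n → ℝ, a * ‖ζ‖ ≤ ‖(Φ k p) *ᵥ ζ‖ →
        b * (ζ ⬝ᵥ ζ) ≤ ∑ i ∈ Finset.range (q + 1),
          (C *ᵥ ((Φ k i) *ᵥ ζ)) ⬝ᵥ (C *ᵥ ((Φ k i) *ᵥ ζ)) :=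
  time_varying_stochastic_uniformly_detectable_general A hpos hstoch Φ hΦ0 hΦsucc C hC
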